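/- Let E and F be nonzero finite-dimensional complex inner product spaces, a : E → F and b : F → F continuous linear maps with b invertible, a† the adjoint of a, κ = ‖a‖²‖b⁻¹‖². Assume N := a† b⁻¹ a is self-adjoint and there is μ > 0 with re⟨v, N v⟩ ≤ −μ‖v‖² for all v ∈ E. Set α̂ = min(‖b⁻¹‖⁻¹/2, μ/(8κ)) − μ and assume α̂ > 0. Then for every μ̃ with 0 ≤ μ̃ ≤ μ/2 and every y ∈ ℝ with |y| ≤ α̂, writing z = i y − μ̃: the maps b − z·id, z·id − a†(b − z·id)⁻¹a, and z·id − N are all invertible; the resolvent difference S(z) = (z·id − a†(b − z·id)⁻¹a)⁻¹ − (z·id − N)⁻¹ satisfies ‖S(z)‖ ≤ 16κμ⁻²|i y − μ̃|; and if in addition y ≠ 0 then also ‖S(z)‖ ≤ 4κ|y|⁻²|i y − μ̃|. -/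

import Mathlib

noncomputable section

variable {E F : Type*} [NormedAddCommGroup E] [InnerProductSpace ℂ E]
  [FiniteDimensional ℂ E] [NormedAddCommGroup F] [InnerProductSpace ℂ F]
  [FiniteDimensional ℂ F]

/-- The resolvent difference `S(z)`: the population block
`(z·id − a†(b − z·id)⁻¹a)⁻¹` of the quantum-network resolvent minus the kinetic-network
resolvent `(z·id − a†b⁻¹a)⁻¹`. -/
def resolventDiff (a : E →L[ℂ] F) (b : F →L[ℂ] F) (z : ℂ) : E →L[ℂ] E :=
  Ring.inverse (z • (1 : E →L[ℂ] E) -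
      (ContinuousLinearMap.adjoint a).comp
        ((Ring.inverse (b - z • (1 : F →L[ℂ] F))).comp a)) -
  Ring.inverse (z • (1 : E →L[ℂ] E) -
      (ContinuousLinearMap.adjoint a).comp ((Ring.inverse b).comp a))

/-!
Write `H = a†(b − z)⁻¹a`, so that `S(z) = (z − H)⁻¹ − (z − N)⁻¹ = (z − H)⁻¹ (H − N) (z − N)⁻¹`.
For an operator `A` with `c‖v‖ ≤ ‖A v‖` and a perturbation `‖D‖ ≤ c / 2`, the operator `A − D`
satisfies the same bound with `c / 2`, so in finite dimension it is invertible with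
`‖(A − D)⁻¹‖ ≤ 2 / c`, hence `‖(A − D)⁻¹ − A⁻¹‖ ≤ 2‖D‖ / c²`.
Applied to `A = b`, `D = z` this gives `‖H − N‖ ≤ 2κ|z|`, which is at most `μ / 4` for `|y| ≤ α̂`.
Applied to `A = z − N`, `D = H − N`, with the lower bound `c = max (re z + μ) |im z|` read off
from the numerical range `⟨v, (z − N) v⟩ = z‖v‖² − ⟨v, N v⟩` of the self-adjoint `N`, it gives
`‖S(z)‖ ≤ 4κ|z| / c²`; both estimates follow from `c ≥ μ / 2` and `c ≥ |y|`.
-/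

open ContinuousLinearMap

section LowerBound

variable {𝕜 V : Type*} [NontriviallyNormedField 𝕜] [NormedAddCommGroup V] [NormedSpace 𝕜 V]
  {A D : V →L[𝕜] V} {c : ℝ}

theorem ContinuousLinearMap.isUnit_of_mul_norm_le [CompleteSpace 𝕜] [FiniteDimensional 𝕜 V]
    (hc : 0 < c) (hA : ∀ v, c * ‖v‖ ≤ ‖A v‖) : IsUnit A := by
  have : CompleteSpace V := FiniteDimensional.complete 𝕜 V
  have hinj : Function.Injective A := by
    refine (injective_iff_map_eq_zero A).2 fun v hv => norm_le_zero_iff.1 ?_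
    have := hA v
    rw [hv, norm_zero] at this
    exact nonpos_of_mul_nonpos_right this hc
  exact isUnit_iff_bijective.2 ⟨hinj, LinearMap.injective_iff_surjective.1 hinj⟩

theorem ContinuousLinearMap.norm_inverse_le_of_mul_norm_le (hA_unit : IsUnit A) (hc : 0 < c)
    (hA : ∀ v, c * ‖v‖ ≤ ‖A v‖) : ‖Ring.inverse A‖ ≤ c⁻¹ := by
  refine opNorm_le_bound _ (inv_nonneg.2 hc.le) fun w => ?_
  have hw : A (Ring.inverse A w) = w := DFunLike.congr_fun (Ring.mul_inverse_cancel A hA_unit) w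
  have := hA (Ring.inverse A w)
  rw [hw] at this
  rwa [inv_mul_eq_div, le_div_iff₀ hc, mul_comm]

theorem ContinuousLinearMap.inv_norm_inverse_mul_norm_le (hA_unit : IsUnit A) (v : V) :
    ‖Ring.inverse A‖⁻¹ * ‖v‖ ≤ ‖A v‖ := by
  have hv : Ring.inverse A (A v) = v := DFunLike.congr_fun (Ring.inverse_mul_cancel A hA_unit) v
  rcases (norm_nonneg (Ring.inverse A)).eq_or_lt with h | h
  · simp [← h]
  · rw [inv_mul_le_iff₀ h]
    calc ‖v‖ = ‖Ring.inverse A (A v)‖ := by rw [hv]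
      _ ≤ ‖Ring.inverse A‖ * ‖A v‖ := le_opNorm _ _

theorem ContinuousLinearMap.norm_smul_one_le (z : 𝕜) : ‖z • (1 : V →L[𝕜] V)‖ ≤ ‖z‖ :=
  (norm_smul_le _ _).trans (mul_le_of_le_one_right (norm_nonneg _) norm_id_le)

theorem ContinuousLinearMap.sub_norm_mul_norm_le (hA : ∀ v, c * ‖v‖ ≤ ‖A v‖) (v : V) :
    (c - ‖D‖) * ‖v‖ ≤ ‖(A - D) v‖ :=
  calc (c - ‖D‖) * ‖v‖ ≤ ‖A v‖ - ‖D v‖ := by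
        nlinarith [hA v, D.le_opNorm v]
    _ ≤ ‖(A - D) v‖ := by
        rw [sub_apply]
        exact norm_sub_norm_le _ _

theorem ContinuousLinearMap.isUnit_sub_of_norm_le_half [CompleteSpace 𝕜]
    [FiniteDimensional 𝕜 V] (hc : 0 < c) (hA : ∀ v, c * ‖v‖ ≤ ‖A v‖) (hD : ‖D‖ ≤ c / 2) :
    IsUnit (A - D) :=
  isUnit_of_mul_norm_le (by linarith) (sub_norm_mul_norm_le hA)

theorem ContinuousLinearMap.norm_inverse_sub_sub_inverse_le [CompleteSpace 𝕜]
    [FiniteDimensional 𝕜 V] (hc : 0 < c) (hA : ∀ v, c * ‖v‖ ≤ ‖A v‖) (hD : ‖D‖ ≤ c / 2) :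
    ‖Ring.inverse (A - D) - Ring.inverse A‖ ≤ 2 * ‖D‖ / c ^ 2 := by
  have hA_unit := isUnit_of_mul_norm_le hc hA
  have hAD_unit := isUnit_sub_of_norm_le_half hc hA hD
  have hAD_inv : ‖Ring.inverse (A - D)‖ ≤ (c / 2)⁻¹ :=
    norm_inverse_le_of_mul_norm_le hAD_unit (by linarith)
      fun v => (sub_norm_mul_norm_le hA v).trans' (by gcongr; linarith)
  rw [Ring.inverse_sub_inverse (iff_of_true hAD_unit hA_unit), sub_sub_cancel]
  calc ‖Ring.inverse (A - D) * D * Ring.inverse A‖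
      ≤ ‖Ring.inverse (A - D)‖ * ‖D‖ * ‖Ring.inverse A‖ := norm_mul₃_le
    _ ≤ (c / 2)⁻¹ * ‖D‖ * c⁻¹ := by
        gcongr
        exact norm_inverse_le_of_mul_norm_le hA_unit hc hA
    _ = 2 * ‖D‖ / c ^ 2 := by field_simp

end LowerBound

section NumericalRange

variable {𝕜 V : Type*} [RCLike 𝕜] [NormedAddCommGroup V] [InnerProductSpace 𝕜 V]

theorem ContinuousLinearMap.mul_norm_le_of_mul_norm_sq_le_norm_inner {T : V →L[𝕜] V} {c : ℝ}
    (h : ∀ v, c * ‖v‖ ^ 2 ≤ ‖inner 𝕜 v (T v)‖) (v : V) : c * ‖v‖ ≤ ‖T v‖ := by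
  rcases (norm_nonneg v).eq_or_lt with hv | hv
  · simp [← hv]
  · refine le_of_mul_le_mul_left ?_ hv
    calc ‖v‖ * (c * ‖v‖) = c * ‖v‖ ^ 2 := by ring
      _ ≤ ‖v‖ * ‖T v‖ := (h v).trans (norm_inner_le_norm _ _)

theorem ContinuousLinearMap.inner_smul_one_sub_apply (z : 𝕜) (N : V →L[𝕜] V) (v : V) :
    inner 𝕜 v ((z • (1 : V →L[𝕜] V) - N) v) = z * (‖v‖ ^ 2 : ℝ) - inner 𝕜 v (N v) := by
  simp [inner_sub_right, inner_smul_right, inner_self_eq_norm_sq_to_K]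

end NumericalRange

theorem IsSelfAdjoint.max_mul_norm_le_norm_smul_one_sub_apply {V : Type*}
    [NormedAddCommGroup V] [InnerProductSpace ℂ V] [CompleteSpace V] {N : V →L[ℂ] V}
    (hN : IsSelfAdjoint N) {μ : ℝ} (hNneg : ∀ v, (inner ℂ v (N v)).re ≤ -μ * ‖v‖ ^ 2) (z : ℂ) :
    ∀ v, max (z.re + μ) |z.im| * ‖v‖ ≤ ‖(z • (1 : V →L[ℂ] V) - N) v‖ := by
  refine mul_norm_le_of_mul_norm_sq_le_norm_inner fun v => ?_
  have him : (inner ℂ v (N v)).im = 0 := hN.isSymmetric.im_inner_self_apply v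
  have hinner : inner ℂ v ((z • (1 : V →L[ℂ] V) - N) v)
      = z * ((‖v‖ ^ 2 : ℝ) : ℂ) - inner ℂ v (N v) := inner_smul_one_sub_apply z N v
  have hre : (z.re + μ) * ‖v‖ ^ 2 ≤ (inner ℂ v ((z • (1 : V →L[ℂ] V) - N) v)).re := by
    simp only [hinner, Complex.sub_re, Complex.mul_re, Complex.ofReal_re, Complex.ofReal_im]
    nlinarith [hNneg v]
  have hIm : |z.im| * ‖v‖ ^ 2 = |(inner ℂ v ((z • (1 : V →L[ℂ] V) - N) v)).im| := by
    simp only [hinner, Complex.sub_im, Complex.mul_im, Complex.ofReal_re, Complex.ofReal_im, him]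
    rw [mul_zero, zero_add, sub_zero, abs_mul, abs_of_nonneg (sq_nonneg ‖v‖)]
  rw [max_mul_of_nonneg _ _ (sq_nonneg _)]
  exact max_le (hre.trans (Complex.re_le_norm _)) (hIm ▸ Complex.abs_im_le_norm _)

section Adjoint

variable {𝕜 V W : Type*} [RCLike 𝕜] [NormedAddCommGroup V] [InnerProductSpace 𝕜 V]
  [CompleteSpace V] [NormedAddCommGroup W] [InnerProductSpace 𝕜 W] [CompleteSpace W]

theorem ContinuousLinearMap.norm_adjoint_comp_comp_le (a : V →L[𝕜] W)
    (M : W →L[𝕜] W) : ‖(adjoint a).comp (M.comp a)‖ ≤ ‖a‖ ^ 2 * ‖M‖ :=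
  calc ‖(adjoint a).comp (M.comp a)‖ ≤ ‖adjoint a‖ * (‖M‖ * ‖a‖) :=
        (opNorm_comp_le _ _).trans (by gcongr; exact opNorm_comp_le _ _)
    _ = ‖a‖ ^ 2 * ‖M‖ := by rw [LinearIsometryEquiv.norm_map]; ring

theorem ContinuousLinearMap.norm_adjoint_comp_inverse_sub_comp_sub_le [FiniteDimensional 𝕜 W]
    (a : V →L[𝕜] W) {b D : W →L[𝕜] W} (hb : IsUnit b) (hβ : 0 < ‖Ring.inverse b‖)
    (hD : ‖D‖ ≤ ‖Ring.inverse b‖⁻¹ / 2) :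
    ‖(adjoint a).comp ((Ring.inverse (b - D)).comp a) - (adjoint a).comp ((Ring.inverse b).comp a)‖
      ≤ 2 * (‖a‖ ^ 2 * ‖Ring.inverse b‖ ^ 2) * ‖D‖ := by
  rw [← comp_sub, ← sub_comp]
  calc _ ≤ ‖a‖ ^ 2 * ‖Ring.inverse (b - D) - Ring.inverse b‖ := norm_adjoint_comp_comp_le _ _
    _ ≤ ‖a‖ ^ 2 * (2 * ‖D‖ / ‖Ring.inverse b‖⁻¹ ^ 2) := by
        gcongr
        exact norm_inverse_sub_sub_inverse_le (inv_pos.2 hβ) (inv_norm_inverse_mul_norm_le hb) hD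
    _ = 2 * (‖a‖ ^ 2 * ‖Ring.inverse b‖ ^ 2) * ‖D‖ := by field_simp

end Adjoint

theorem resolventDiff_bound_shifted_small_y_general
    (a : E →L[ℂ] F) (b : F →L[ℂ] F) (hb : IsUnit b)
    (N : E →L[ℂ] E)
    (hN : N = (ContinuousLinearMap.adjoint a).comp ((Ring.inverse b).comp a))
    (hNsa : IsSelfAdjoint N)
    (μ : ℝ) (hμ : 0 < μ)
    (hNneg : ∀ v : E, (inner ℂ v (N v) : ℂ).re ≤ -μ * ‖v‖ ^ 2)
    (κ αh : ℝ) (hκ : κ = ‖a‖ ^ 2 * ‖Ring.inverse b‖ ^ 2)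
    (hαh : αh = min (‖Ring.inverse b‖⁻¹ / 2) (μ / (8 * κ)) - μ)
    (hαhpos : 0 < αh)
    (μt : ℝ) (hμt0 : 0 ≤ μt) (hμt : μt ≤ μ / 2)
    (y : ℝ) (hy : |y| ≤ αh) :
    IsUnit (b - (Complex.I * y - μt) • (1 : F →L[ℂ] F)) ∧
    IsUnit ((Complex.I * y - μt) • (1 : E →L[ℂ] E) -
      (ContinuousLinearMap.adjoint a).comp
        ((Ring.inverse (b - (Complex.I * y - μt) • (1 : F →L[ℂ] F))).comp a)) ∧
    IsUnit ((Complex.I * y - μt) • (1 : E →L[ℂ] E) - N) ∧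
    ‖resolventDiff a b (Complex.I * y - μt)‖ ≤
      16 * κ * (μ ^ 2)⁻¹ * ‖Complex.I * y - μt‖ ∧
    (y ≠ 0 → ‖resolventDiff a b (Complex.I * y - μt)‖ ≤
      4 * κ * (|y| ^ 2)⁻¹ * ‖Complex.I * y - μt‖) := by
  set z : ℂ := Complex.I * y - μt
  set H := (adjoint a).comp ((Ring.inverse (b - z • (1 : F →L[ℂ] F))).comp a)
  have hκ_pos : 0 < κ := by
    refine (hκ ▸ by positivity : 0 ≤ κ).lt_of_ne' fun hκ0 => ?_
    -- with `κ = 0` the junk value `μ / 0 = 0` forces `αh ≤ -μ`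
    rw [hκ0, mul_zero, div_zero] at hαh
    linarith [min_le_right (‖Ring.inverse b‖⁻¹ / 2) 0]
  have hβ_pos : 0 < ‖Ring.inverse b‖ := by
    refine (norm_nonneg _).lt_of_ne' fun hβ0 => hκ_pos.ne' ?_
    rw [hκ, hβ0, zero_pow two_ne_zero, mul_zero]
  have hz : ‖z‖ ≤ |y| + μt := by
    refine (norm_sub_le _ _).trans_eq ?_
    simp [abs_of_nonneg hμt0]
  have hz_b : ‖z • (1 : F →L[ℂ] F)‖ ≤ ‖Ring.inverse b‖⁻¹ / 2 := by
    refine (norm_smul_one_le z).trans ?_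
    linarith [min_le_left (‖Ring.inverse b‖⁻¹ / 2) (μ / (8 * κ))]
  have hz_κ : 2 * κ * ‖z‖ ≤ μ / 4 := by
    have : ‖z‖ ≤ μ / (8 * κ) := by
      linarith [min_le_right (‖Ring.inverse b‖⁻¹ / 2) (μ / (8 * κ))]
    rw [le_div_iff₀ (by positivity)] at this
    linarith
  have hHN : ‖H - N‖ ≤ 2 * κ * ‖z‖ := by
    rw [hN, hκ]
    exact (norm_adjoint_comp_inverse_sub_comp_sub_le a hb hβ_pos hz_b).trans
      (by gcongr; exact norm_smul_one_le z)
  set c := max (z.re + μ) |z.im|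
  have hzN_lower := hNsa.max_mul_norm_le_norm_smul_one_sub_apply hNneg z
  have hc : μ / 2 ≤ c := le_max_of_le_left (by simp [z]; linarith)
  have hHN_c : ‖H - N‖ ≤ c / 2 := by linarith
  have hS : ‖resolventDiff a b z‖ ≤ 4 * κ * ‖z‖ / c ^ 2 := by
    have := norm_inverse_sub_sub_inverse_le (by linarith) hzN_lower hHN_c
    rw [sub_sub_sub_cancel_right] at this
    rw [resolventDiff, ← hN]
    exact this.trans (div_le_div_of_nonneg_right (by linarith) (by positivity))
  refine ⟨isUnit_sub_of_norm_le_half (inv_pos.2 hβ_pos) (inv_norm_inverse_mul_norm_le hb) hz_b,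
    by simpa only [sub_sub_sub_cancel_right] using
      isUnit_sub_of_norm_le_half (by linarith) hzN_lower hHN_c,
    isUnit_of_mul_norm_le (by linarith) hzN_lower, ?_, fun hy0 => ?_⟩
  · calc _ ≤ 4 * κ * ‖z‖ / (μ / 2) ^ 2 := hS.trans (by gcongr)
      _ = 16 * κ * (μ ^ 2)⁻¹ * ‖z‖ := by field_simp; ring
  · have hy_c : |y| ≤ c := le_max_of_le_right (by simp [z])
    calc _ ≤ 4 * κ * ‖z‖ / |y| ^ 2 := hS.trans (by gcongr)
      _ = 4 * κ * (|y| ^ 2)⁻¹ * ‖z‖ := by ring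

/-- **Resolvent difference bounds on the line `re z = −μ̃`, small `|y|`.** -/
theorem resolventDiff_bound_shifted_small_y
    [Nontrivial E] [Nontrivial F]
    (a : E →L[ℂ] F) (b : F →L[ℂ] F) (hb : IsUnit b)
    (N : E →L[ℂ] E)
    (hN : N = (ContinuousLinearMap.adjoint a).comp ((Ring.inverse b).comp a))
    (hNsa : IsSelfAdjoint N)
    (μ : ℝ) (hμ : 0 < μ)
    (hNneg : ∀ v : E, (inner ℂ v (N v) : ℂ).re ≤ -μ * ‖v‖ ^ 2)
    (κ αh : ℝ) (hκ : κ = ‖a‖ ^ 2 * ‖Ring.inverse b‖ ^ 2)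
    (hαh : αh = min (‖Ring.inverse b‖⁻¹ / 2) (μ / (8 * κ)) - μ)
    (hαhpos : 0 < αh)
    (μt : ℝ) (hμt0 : 0 ≤ μt) (hμt : μt ≤ μ / 2)
    (y : ℝ) (hy : |y| ≤ αh) :
    IsUnit (b - (Complex.I * y - μt) • (1 : F →L[ℂ] F)) ∧
    IsUnit ((Complex.I * y - μt) • (1 : E →L[ℂ] E) -
      (ContinuousLinearMap.adjoint a).comp
        ((Ring.inverse (b - (Complex.I * y - μt) • (1 : F →L[ℂ] F))).comp a)) ∧
    IsUnit ((Complex.I * y - μt) • (1 : E →L[ℂ] E) - N) ∧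
    ‖resolventDiff a b (Complex.I * y - μt)‖ ≤
      16 * κ * (μ ^ 2)⁻¹ * ‖Complex.I * y - μt‖ ∧
    (y ≠ 0 → ‖resolventDiff a b (Complex.I * y - μt)‖ ≤
      4 * κ * (|y| ^ 2)⁻¹ * ‖Complex.I * y - μt‖) :=
  resolventDiff_bound_shifted_small_y_general a b hb N hN hNsa μ hμ hNneg κ αh hκ hαh hαhpos μt hμt0
    hμt y hy
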